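/- Let γ ∈ [0,1]. For every pair (ρ₀, ρ₁) of qubit density matrices, the difference D = N_γ(ρ₀) − N_γ(ρ₁) is a Hermitian 2×2 matrix whose eigenvalues λ₁, λ₂ satisfy |λ₁| + |λ₂| ≤ 2·√(1−γ); moreover, equality holds when ρ₀ = ρ₊ and ρ₁ = ρ₋. -/

import Mathlib

/-!
With `Δ = ρ₀ - ρ₁`, the difference `D = N_γ(Δ)` is Hermitian and traceless, so its eigenvalues
are `±√(-det D)` and its trace norm is `2√(D₁₁² + |D₀₁|²)`. The channel multiplies `Δ₁₁` by
`1 - γ` and `Δ₀₁` by `√(1 - γ)`, which gives `2√(1 - γ) · √((1 - γ)Δ₁₁² + |Δ₀₁|²)`. Positivity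
of a density matrix bounds `|ρ₀₁|² ≤ ρ₀₀ρ₁₁`, and this forces `Δ₁₁² + |Δ₀₁|² ≤ 1`. For
`ρ₊ - ρ₋ = σ_x` one has `Δ₁₁ = 0` and `|Δ₀₁| = 1`, so the bound is attained.
-/

open Matrix Complex
open scoped ComplexOrder

/-- Kraus operator `K₀` of the qubit amplitude damping channel. -/
noncomputable def K₀ (γ : ℝ) : Matrix (Fin 2) (Fin 2) ℂ :=
  !![1, 0; 0, (Real.sqrt (1 - γ) : ℂ)]

/-- Kraus operator `K₁` of the qubit amplitude damping channel. -/
noncomputable def K₁ (γ : ℝ) : Matrix (Fin 2) (Fin 2) ℂ :=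
  !![0, (Real.sqrt γ : ℂ); 0, 0]

/-- The qubit amplitude damping channel with damping parameter `γ`. -/
noncomputable def ADC (γ : ℝ) (ρ : Matrix (Fin 2) (Fin 2) ℂ) : Matrix (Fin 2) (Fin 2) ℂ :=
  K₀ γ * ρ * (K₀ γ)ᴴ + K₁ γ * ρ * (K₁ γ)ᴴ

/-- The state `ρ₊ = |+⟩⟨+|`. -/
noncomputable def ρPlus : Matrix (Fin 2) (Fin 2) ℂ := (1/2 : ℂ) • !![1, 1; 1, 1]

/-- The state `ρ₋ = |−⟩⟨−|`. -/
noncomputable def ρMinus : Matrix (Fin 2) (Fin 2) ℂ := (1/2 : ℂ) • !![1, -1; -1, 1]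

/- `p² ≤ ab` with `a + b = 1` places `(b, p)` in the disc with diameter `[0, 1] × {0}`, and
likewise `(d, -q)`; two points of a disc of diameter `1` are at distance at most `1`. -/
theorem sq_sub_add_sq_add_le_one {a b c d p q : ℝ} (hab : a + b = 1) (hcd : c + d = 1)
    (hp : p ^ 2 ≤ a * b) (hq : q ^ 2 ≤ c * d) : (b - d) ^ 2 + (p + q) ^ 2 ≤ 1 := by
  obtain rfl : a = 1 - b := by linarith
  obtain rfl : c = 1 - d := by linarith
  have hb : 0 ≤ b := by nlinarith [sq_nonneg p]
  have hb' : b ≤ 1 := by nlinarith [sq_nonneg p]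
  have hd : 0 ≤ d := by nlinarith [sq_nonneg q]
  have hd' : d ≤ 1 := by nlinarith [sq_nonneg q]
  have hpq : (2 * (p * q)) ^ 2 ≤ ((1 - b) * (1 - d) + b * d) ^ 2 := by
    nlinarith [mul_le_mul hp hq (sq_nonneg q) (by nlinarith), sq_nonneg ((1 - b) * (1 - d) - b * d)]
  nlinarith [(abs_le_of_sq_le_sq' hpq (by nlinarith)).2]

namespace Matrix

variable {𝕜 : Type*} [RCLike 𝕜]

lemma IsHermitian.im_apply_self {n : Type*} {M : Matrix n n 𝕜} (hM : M.IsHermitian) (i : n) :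
    RCLike.im (M i i) = 0 :=
  RCLike.conj_eq_iff_im.mp (hM.apply i i)

lemma IsHermitian.neg_re_det_fin_two_of_trace_eq_zero {M : Matrix (Fin 2) (Fin 2) 𝕜}
    (hM : M.IsHermitian) (ht : M.trace = 0) :
    -RCLike.re M.det = RCLike.re (M 1 1) ^ 2 + ‖M 0 1‖ ^ 2 := by
  have h00 : M 0 0 = -M 1 1 := by rw [trace_fin_two] at ht; linear_combination ht
  simp only [det_fin_two, h00, ← hM.apply 1 0, RCLike.star_def, RCLike.mul_conj]
  simp only [neg_mul, map_sub, map_neg, RCLike.mul_re, hM.im_apply_self, mul_zero, sub_zero,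
    RCLike.re_ofReal_pow, neg_sub, sub_neg_eq_add]
  ring

lemma IsHermitian.sum_abs_eigenvalues_fin_two_of_trace_eq_zero {M : Matrix (Fin 2) (Fin 2) 𝕜}
    (hM : M.IsHermitian) (ht : M.trace = 0) :
    ∑ i, |hM.eigenvalues i| = 2 * √(-RCLike.re M.det) := by
  have hsum : hM.eigenvalues 1 = -hM.eigenvalues 0 := by
    have := hM.trace_eq_sum_eigenvalues
    rw [ht, Fin.sum_univ_two, ← RCLike.ofReal_add, eq_comm, RCLike.ofReal_eq_zero] at this
    linarith
  rw [hM.det_eq_prod_eigenvalues, Fin.prod_univ_two, ← RCLike.ofReal_mul, RCLike.ofReal_re,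
    Fin.sum_univ_two, hsum, abs_neg, mul_neg, neg_neg, ← sq, Real.sqrt_sq_eq_abs]
  ring

lemma PosSemidef.norm_apply_zero_one_sq_le {ρ : Matrix (Fin 2) (Fin 2) 𝕜} (hρ : ρ.PosSemidef) :
    ‖ρ 0 1‖ ^ 2 ≤ RCLike.re (ρ 0 0) * RCLike.re (ρ 1 1) := by
  have := (RCLike.nonneg_iff.mp hρ.det_nonneg).1
  simp only [det_fin_two, ← hρ.1.apply 1 0, RCLike.star_def, RCLike.mul_conj] at this
  simpa [RCLike.mul_re, hρ.1.im_apply_self] using this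

lemma PosSemidef.sq_re_sub_apply_add_sq_norm_sub_apply_le_one {ρ₀ ρ₁ : Matrix (Fin 2) (Fin 2) 𝕜}
    (hρ₀ : ρ₀.PosSemidef) (hρ₀t : ρ₀.trace = 1) (hρ₁ : ρ₁.PosSemidef) (hρ₁t : ρ₁.trace = 1) :
    RCLike.re ((ρ₀ - ρ₁) 1 1) ^ 2 + ‖(ρ₀ - ρ₁) 0 1‖ ^ 2 ≤ 1 := by
  have re_trace {ρ : Matrix (Fin 2) (Fin 2) 𝕜} (h : ρ.trace = 1) :
      RCLike.re (ρ 0 0) + RCLike.re (ρ 1 1) = 1 := by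
    simpa [trace_fin_two] using congrArg RCLike.re h
  have hsum := sq_sub_add_sq_add_le_one (re_trace hρ₀t) (re_trace hρ₁t)
    hρ₀.norm_apply_zero_one_sq_le hρ₁.norm_apply_zero_one_sq_le
  calc RCLike.re ((ρ₀ - ρ₁) 1 1) ^ 2 + ‖(ρ₀ - ρ₁) 0 1‖ ^ 2
      ≤ (RCLike.re (ρ₀ 1 1) - RCLike.re (ρ₁ 1 1)) ^ 2 + (‖ρ₀ 0 1‖ + ‖ρ₁ 0 1‖) ^ 2 := by
        rw [sub_apply, sub_apply, map_sub]
        gcongr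
        exact norm_sub_le _ _
    _ ≤ 1 := hsum

end Matrix

lemma ADC_sub (γ : ℝ) (A B : Matrix (Fin 2) (Fin 2) ℂ) : ADC γ (A - B) = ADC γ A - ADC γ B := by
  simp only [ADC, mul_sub, sub_mul]
  abel

lemma Matrix.IsHermitian.ADC {ρ : Matrix (Fin 2) (Fin 2) ℂ} (hρ : ρ.IsHermitian) (γ : ℝ) :
    (ADC γ ρ).IsHermitian :=
  (isHermitian_mul_mul_conjTranspose _ hρ).add (isHermitian_mul_mul_conjTranspose _ hρ)

lemma ADC_eq_of_nonneg_of_le_one (γ : ℝ) (hγ0 : 0 ≤ γ) (hγ1 : γ ≤ 1)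
    (ρ : Matrix (Fin 2) (Fin 2) ℂ) :
    ADC γ ρ = !![ρ 0 0 + γ * ρ 1 1, √(1 - γ) * ρ 0 1; √(1 - γ) * ρ 1 0, (1 - γ) * ρ 1 1] := by
  have hγ : ((√γ : ℝ) : ℂ) ^ 2 = γ := by rw [← ofReal_pow, Real.sq_sqrt hγ0]
  have hγ' : ((√(1 - γ) : ℝ) : ℂ) ^ 2 = 1 - γ := by
    rw [← ofReal_pow, Real.sq_sqrt (by linarith)]; push_cast; ring
  have hK₀ : (K₀ γ)ᴴ = K₀ γ := by ext i j; fin_cases i <;> fin_cases j <;> simp [K₀]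
  have hK₁ : (K₁ γ)ᴴ = !![0, 0; (√γ : ℂ), 0] := by
    ext i j; fin_cases i <;> fin_cases j <;> simp [K₁]
  rw [ADC, hK₀, hK₁, K₀, K₁, eta_fin_two ρ]
  ext i j
  fin_cases i <;> fin_cases j <;> simp
  · linear_combination ρ 1 1 * hγ
  · ring
  · linear_combination ρ 1 1 * hγ'

lemma trace_ADC (γ : ℝ) (hγ0 : 0 ≤ γ) (hγ1 : γ ≤ 1) (ρ : Matrix (Fin 2) (Fin 2) ℂ) :
    (ADC γ ρ).trace = ρ.trace := by
  simp only [ADC_eq_of_nonneg_of_le_one γ hγ0 hγ1, trace_fin_two, of_apply, cons_val',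
    cons_val_zero, cons_val_one, empty_val', cons_val_fin_one]
  ring

lemma sum_abs_eigenvalues_ADC (γ : ℝ) (hγ0 : 0 ≤ γ) (hγ1 : γ ≤ 1) {Δ : Matrix (Fin 2) (Fin 2) ℂ}
    (ht : Δ.trace = 0) (h : (ADC γ Δ).IsHermitian) :
    ∑ i, |h.eigenvalues i| = 2 * √(1 - γ) * √((1 - γ) * (Δ 1 1).re ^ 2 + ‖Δ 0 1‖ ^ 2) := by
  have htADC : (ADC γ Δ).trace = 0 := by rw [trace_ADC γ hγ0 hγ1, ht]
  rw [h.sum_abs_eigenvalues_fin_two_of_trace_eq_zero htADC,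
    h.neg_re_det_fin_two_of_trace_eq_zero htADC, ADC_eq_of_nonneg_of_le_one γ hγ0 hγ1]
  have h1γ : 0 ≤ 1 - γ := by linarith
  simp only [Fin.isValue, of_apply, cons_val', cons_val_one, cons_val_fin_one, RCLike.mul_re,
    RCLike.re_to_complex, sub_re, one_re, ofReal_re, RCLike.im_to_complex, sub_im, one_im,
    ofReal_im, sub_self, zero_mul, sub_zero, cons_val_zero, Complex.norm_mul, norm_real,
    Real.norm_eq_abs]
  rw [abs_of_nonneg (Real.sqrt_nonneg _), mul_assoc, ← Real.sqrt_mul h1γ, mul_pow, mul_pow,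
    Real.sq_sqrt h1γ]
  ring_nf

lemma ρPlus_sub_ρMinus : ρPlus - ρMinus = !![0, 1; 1, 0] := by
  ext i j
  fin_cases i <;> fin_cases j <;> simp [ρPlus, ρMinus] <;> norm_num

/-- For `γ ∈ [0,1]` and qubit density matrices `ρ₀, ρ₁`, the difference
`D = N_γ(ρ₀) − N_γ(ρ₁)` is Hermitian, the sum of the absolute values of its eigenvalues
(its trace norm) is at most `2√(1−γ)`, and equality holds for `ρ₀ = ρ₊`, `ρ₁ = ρ₋`. -/
theorem stmt3 (γ : ℝ) (hγ0 : 0 ≤ γ) (hγ1 : γ ≤ 1)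
    (ρ₀ ρ₁ : Matrix (Fin 2) (Fin 2) ℂ)
    (hρ₀ : ρ₀.PosSemidef) (hρ₀t : ρ₀.trace = 1)
    (hρ₁ : ρ₁.PosSemidef) (hρ₁t : ρ₁.trace = 1) :
    (ADC γ ρ₀ - ADC γ ρ₁).IsHermitian ∧
    (∀ hD : (ADC γ ρ₀ - ADC γ ρ₁).IsHermitian,
      ∑ i, |hD.eigenvalues i| ≤ 2 * Real.sqrt (1 - γ)) ∧
    (∀ hE : (ADC γ ρPlus - ADC γ ρMinus).IsHermitian,
      ∑ i, |hE.eigenvalues i| = 2 * Real.sqrt (1 - γ)) := by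
  simp only [← ADC_sub, ρPlus_sub_ρMinus]
  have hΔt : (ρ₀ - ρ₁).trace = 0 := by rw [trace_sub, hρ₀t, hρ₁t, sub_self]
  refine ⟨(hρ₀.1.sub hρ₁.1).ADC γ, fun hD => ?_, fun hE => ?_⟩
  · rw [sum_abs_eigenvalues_ADC γ hγ0 hγ1 hΔt]
    have hdist := hρ₀.sq_re_sub_apply_add_sq_norm_sub_apply_le_one hρ₀t hρ₁ hρ₁t
    rw [RCLike.re_to_complex] at hdist
    have hle : (1 - γ) * ((ρ₀ - ρ₁) 1 1).re ^ 2 + ‖(ρ₀ - ρ₁) 0 1‖ ^ 2 ≤ 1 := by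
      nlinarith [sq_nonneg ((ρ₀ - ρ₁) 1 1).re]
    exact mul_le_of_le_one_right (by positivity) (Real.sqrt_le_one.mpr hle)
  · rw [sum_abs_eigenvalues_ADC γ hγ0 hγ1 (by simp [trace_fin_two])]
    simp
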